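/- Let A ∈ ℤ^{m×n} with Δ = Δ(A) the maximum absolute value of m×m minors (assume rank(A) = m), and let γ > 0. Then |{A x : x ∈ ℝⁿ, ‖x‖₁ ≤ γ} ∩ ℤ^m| ≤ (2γ + 1)^m · Δ. -/

import Mathlib

/-- The maximum absolute value of `m × m` (column-selected) minors of an
`m × n` integer matrix. -/
def maxMinorCols {m n : ℕ} (A : Matrix (Fin m) (Fin n) ℤ) : ℕ :=
  Finset.univ.sup (fun f : Fin m → Fin n => ((A.submatrix id f).det).natAbs)

/-!
Let `B` be an `m × m` submatrix of `A` whose determinant has maximal absolute value `Δ`. By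
Cramer's rule the entries of `B⁻¹ A` are minors of `A` divided by `det B`, so they lie in
`[-1, 1]`, and every `A x` with `‖x‖₁ ≤ γ` equals `B z` with `‖z‖∞ ≤ γ`. The integer points of
`B [-γ, γ]^m` are counted in each of the `Δ` cosets of the lattice `B ℤ^m`: inside the coset
`r + B ℤ^m` they are the points `r + B w` with `w` an integer point of a translate of the cube
`[-γ, γ]^m`, and there are at most `(⌊2γ⌋ + 1)^m` of those.
-/

open Matrix

theorem Int.exists_eq_ceil_sub_add_of_abs_sub_le {k : ℤ} {c γ : ℝ} (h : |(k : ℝ) - c| ≤ γ) :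
    ∃ j : Fin (⌊2 * γ⌋₊ + 1), k = ⌈c - γ⌉ + j := by
  obtain ⟨hlo, hhi⟩ := abs_le.mp h
  have hceil : ⌈c - γ⌉ ≤ k := Int.ceil_le.mpr (by linarith)
  refine ⟨⟨(k - ⌈c - γ⌉).toNat, Nat.lt_succ_of_le (Nat.le_floor ?_)⟩, by simp; omega⟩
  have := Int.le_ceil (c - γ)
  rw [← Int.cast_natCast, Int.toNat_of_nonneg (sub_nonneg.mpr hceil)]
  push_cast
  linarith

namespace Matrix

theorem rank_le_rank_map_algebraMap {R : Type*} (K : Type*) [CommRing R] [IsDomain R] [Field K]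
    [Algebra R K] [IsFractionRing R K] {m n : Type*} [Fintype n] (A : Matrix m n R) :
    A.rank ≤ (A.map (algebraMap R K)).rank := by
  obtain ⟨v, hv⟩ := exists_linearIndependent_of_le_finrank (le_refl A.rank)
  let φ : (m → R) →ₗ[R] (m → K) := (Algebra.linearMap R K).compLeft m
  have hφ : Function.Injective φ := fun x y h => funext fun i =>
    IsFractionRing.injective R K (congrFun h i)
  have hliR : LinearIndependent R (φ ∘ Subtype.val ∘ v) :=
    (hv.map' _ (Submodule.ker_subtype _)).map' φ (LinearMap.ker_eq_bot.mpr hφ)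
  have hliK := (LinearIndependent.iff_fractionRing R K).mp hliR
  have hle : Submodule.span K (Set.range (φ ∘ Subtype.val ∘ v)) ≤
      LinearMap.range (A.map (algebraMap R K)).mulVecLin := by
    rw [Submodule.span_le]
    rintro _ ⟨i, rfl⟩
    obtain ⟨x, hx⟩ := (v i).2
    refine ⟨algebraMap R K ∘ x, funext fun j => ?_⟩
    simp [φ, ← hx, RingHom.map_mulVec]
  have := Submodule.finrank_mono hle
  rwa [finrank_span_eq_card hliK, Fintype.card_fin] at this

variable {m : Type*} [Fintype m] [DecidableEq m]

theorem exists_det_submatrix_ne_zero_of_rank_eq_card {K : Type*} [Field K]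
    {n : Type*} [Fintype n] {A : Matrix m n K} (hA : A.rank = Fintype.card m) :
    ∃ f : m → n, (A.submatrix id f).det ≠ 0 := by
  obtain ⟨κ, a, ha, hspan, hli⟩ := exists_linearIndependent' K A.col
  have : Finite κ := Finite.of_injective a ha
  have : Fintype κ := Fintype.ofFinite κ
  have hcard : Fintype.card κ = Fintype.card m := by
    rw [← finrank_span_eq_card hli, hspan, ← hA, rank_eq_finrank_span_cols]
  let e : m ≃ κ := (Fintype.equivOfCardEq hcard).symm
  refine ⟨a ∘ e, ?_⟩
  rw [← isUnit_iff_ne_zero, ← isUnit_iff_isUnit_det, ← linearIndependent_cols_iff_isUnit]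
  exact hli.comp e e.injective

theorem exists_det_submatrix_ne_zero_of_rank_eq_card_of_isDomain {R : Type*} [CommRing R]
    [IsDomain R] {n : Type*} [Fintype n] {A : Matrix m n R} (hA : A.rank = Fintype.card m) :
    ∃ f : m → n, (A.submatrix id f).det ≠ 0 := by
  let K := FractionRing R
  have hAK : (A.map (algebraMap R K)).rank = Fintype.card m :=
    le_antisymm (rank_le_card_height _) (hA ▸ rank_le_rank_map_algebraMap K A)
  obtain ⟨f, hf⟩ := exists_det_submatrix_ne_zero_of_rank_eq_card hAK
  refine ⟨f, fun h => hf ?_⟩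
  rw [submatrix_map, ← RingHom.mapMatrix_apply, ← RingHom.map_det, h, map_zero]

theorem adjugate_submatrix_mul_apply {R : Type*} [CommRing R] {n : Type*} [Fintype n]
    [DecidableEq n] (A : Matrix m n R) (f : m → n) (i : m) (k : n) :
    ((A.submatrix id f).adjugate * A) i k = (A.submatrix id (Function.update f i k)).det := by
  rw [show ((A.submatrix id f).adjugate * A) i k = ((A.submatrix id f).adjugate *ᵥ A.col k) i
    from rfl, ← cramer_eq_adjugate_mulVec, cramer_apply]
  congr 1
  ext r j
  rcases eq_or_ne j i with rfl | hj <;> simp [*]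

section LinearOrderedField

variable {K : Type*} [Field K] [LinearOrder K] [IsStrictOrderedRing K]
  {n : Type*} [Fintype n] [DecidableEq n] {A : Matrix m n K} {f : m → n}

theorem abs_inv_submatrix_mul_apply_le_one (hf : (A.submatrix id f).det ≠ 0)
    (hmax : ∀ g : m → n, |(A.submatrix id g).det| ≤ |(A.submatrix id f).det|) (i : m) (k : n) :
    |((A.submatrix id f)⁻¹ * A) i k| ≤ 1 := by
  rw [inv_def, Ring.inverse_eq_inv', smul_mul, smul_apply, adjugate_submatrix_mul_apply,
    smul_eq_mul, abs_mul, abs_inv, inv_mul_le_iff₀ (abs_pos.mpr hf), mul_one]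
  exact hmax _

theorem exists_submatrix_mulVec_eq_mulVec (hf : (A.submatrix id f).det ≠ 0)
    (hmax : ∀ g : m → n, |(A.submatrix id g).det| ≤ |(A.submatrix id f).det|) (x : n → K) :
    ∃ z : m → K, (∀ i, |z i| ≤ ∑ k, |x k|) ∧ A.submatrix id f *ᵥ z = A *ᵥ x := by
  refine ⟨((A.submatrix id f)⁻¹ * A) *ᵥ x, fun i => ?_, ?_⟩
  · calc |(((A.submatrix id f)⁻¹ * A) *ᵥ x) i|
        ≤ ∑ k, |((A.submatrix id f)⁻¹ * A) i k| * |x k| := by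
          simpa only [mulVec, dotProduct, abs_mul] using
            Finset.abs_sum_le_sum_abs (fun k => ((A.submatrix id f)⁻¹ * A) i k * x k) Finset.univ
      _ ≤ ∑ k, |x k| := Finset.sum_le_sum fun k _ =>
          mul_le_of_le_one_left (abs_nonneg _) (abs_inv_submatrix_mul_apply_le_one hf hmax i k)
  · rw [mulVec_mulVec, ← Matrix.mul_assoc, mul_nonsing_inv _ (isUnit_iff_ne_zero.mpr hf),
      Matrix.one_mul]

end LinearOrderedField

theorem natCard_quotient_range_mulVecLin {B : Matrix m m ℤ} (hB : B.det ≠ 0) :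
    Nat.card ((m → ℤ) ⧸ LinearMap.range B.mulVecLin) = B.det.natAbs := by
  have hinj : Function.Injective B.mulVecLin :=
    mulVec_injective_of_det_mem_nonZeroDivisors (mem_nonZeroDivisors_of_ne_zero hB)
  rw [← Submodule.natAbs_det_equiv _ (LinearEquiv.ofInjective _ hinj), ← LinearMap.det_toLin']
  congr 2

theorem eq_intCast_add_inv_mulVec {K : Type*} [Field K] [CharZero K] {B : Matrix m m ℤ}
    (hB : B.det ≠ 0) {w r y : m → ℤ} {z : m → K} (hw : B *ᵥ w + r = y)
    (hz : B.map (↑) *ᵥ z = (↑) ∘ y) : z = (↑) ∘ w + (B.map (↑))⁻¹ *ᵥ ((↑) ∘ r) := by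
  have hBK : IsUnit (B.map ((↑) : ℤ → K)).det := by
    rw [isUnit_iff_ne_zero, ← Int.cast_det]
    exact_mod_cast hB
  have hy : ((↑) ∘ y : m → K) = B.map (↑) *ᵥ ((↑) ∘ w) + (↑) ∘ r := by
    ext i
    simpa [← hw] using RingHom.map_mulVec (Int.castRingHom K) B w i
  calc z = (B.map (↑))⁻¹ *ᵥ (B.map (↑) *ᵥ z) := by
        rw [mulVec_mulVec, nonsing_inv_mul _ hBK, one_mulVec]
    _ = _ := by rw [hz, hy, mulVec_add, mulVec_mulVec, nonsing_inv_mul _ hBK, one_mulVec]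

theorem finite_and_natCard_le_of_forall_eq_mulVec {B : Matrix m m ℤ} (hB : B.det ≠ 0) {γ : ℝ}
    {S : Set (m → ℤ)}
    (hS : ∀ y ∈ S, ∃ z : m → ℝ, (∀ i, |z i| ≤ γ) ∧ B.map (↑) *ᵥ z = (↑) ∘ y) :
    S.Finite ∧ Nat.card S ≤ B.det.natAbs * (⌊2 * γ⌋₊ + 1) ^ Fintype.card m := by
  set L := LinearMap.range B.mulVecLin
  have hQ : Nat.card ((m → ℤ) ⧸ L) = B.det.natAbs := natCard_quotient_range_mulVecLin hB
  have : Finite ((m → ℤ) ⧸ L) := Nat.finite_of_card_ne_zero (by simpa [hQ] using hB)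
  let r := Function.surjInv (Submodule.Quotient.mk_surjective L)
  -- the points `r q + B w` of `S` have `w` in the cube of radius `γ` around `c q`
  let c : (m → ℤ) ⧸ L → m → ℝ := fun q => -((B.map (↑))⁻¹ *ᵥ ((↑) ∘ r q))
  let Ψ : ((m → ℤ) ⧸ L) × (m → Fin (⌊2 * γ⌋₊ + 1)) → (m → ℤ) :=
    fun p => r p.1 + B *ᵥ fun i => ⌈c p.1 i - γ⌉ + p.2 i
  have hsub : S ⊆ Set.range Ψ := by
    intro y hy
    obtain ⟨z, hz, hyz⟩ := hS y hy
    set q : (m → ℤ) ⧸ L := Submodule.Quotient.mk y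
    obtain ⟨w, hw⟩ : y - r q ∈ L :=
      (Submodule.Quotient.eq L).mp (Function.surjInv_eq (Submodule.Quotient.mk_surjective L) q).symm
    replace hw : B *ᵥ w + r q = y := eq_sub_iff_add_eq.mp hw
    have hzw : ∀ i, (w i : ℝ) - c q i = z i := fun i => by
      simp [c, eq_intCast_add_inv_mulVec hB hw hyz]
    choose j hj using fun i => Int.exists_eq_ceil_sub_add_of_abs_sub_le ((hzw i).symm ▸ hz i)
    refine ⟨(q, j), ?_⟩
    simp only [Ψ, ← funext hj]
    exact (add_comm _ _).trans hw
  refine ⟨(Set.finite_range Ψ).subset hsub, ?_⟩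
  calc Nat.card S ≤ Nat.card (Set.range Ψ) := Nat.card_mono (Set.finite_range Ψ) hsub
    _ ≤ Nat.card (((m → ℤ) ⧸ L) × (m → Fin (⌊2 * γ⌋₊ + 1))) := Finite.card_range_le Ψ
    _ = B.det.natAbs * (⌊2 * γ⌋₊ + 1) ^ Fintype.card m := by
      rw [Nat.card_prod, hQ, Nat.card_fun, Nat.card_eq_fintype_card (α := m), Nat.card_fin]

end Matrix

theorem natAbs_det_submatrix_le_maxMinorCols {m n : ℕ} (A : Matrix (Fin m) (Fin n) ℤ)
    (g : Fin m → Fin n) : (A.submatrix id g).det.natAbs ≤ maxMinorCols A :=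
  Finset.le_sup (f := fun f : Fin m → Fin n => (A.submatrix id f).det.natAbs) (Finset.mem_univ g)

theorem exists_natAbs_det_submatrix_eq_maxMinorCols {m n : ℕ} [Nonempty (Fin m → Fin n)]
    (A : Matrix (Fin m) (Fin n) ℤ) :
    ∃ f : Fin m → Fin n, (A.submatrix id f).det.natAbs = maxMinorCols A := by
  obtain ⟨f, -, hf⟩ := Finset.exists_mem_eq_sup Finset.univ Finset.univ_nonempty
    (fun f : Fin m → Fin n => (A.submatrix id f).det.natAbs)
  exact ⟨f, hf.symm⟩

theorem abs_det_submatrix_map_intCast_le {K : Type*} [CommRing K] [LinearOrder K]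
    [IsStrictOrderedRing K] {m n : ℕ} {A : Matrix (Fin m) (Fin n) ℤ} {f : Fin m → Fin n}
    (hf : (A.submatrix id f).det.natAbs = maxMinorCols A) (g : Fin m → Fin n) :
    |((A.map (Int.cast : ℤ → K)).submatrix id g).det| ≤
      |((A.map (Int.cast : ℤ → K)).submatrix id f).det| := by
  simp only [submatrix_map, ← Int.cast_det, ← Int.cast_abs, Int.abs_eq_natAbs, hf]
  exact_mod_cast natAbs_det_submatrix_le_maxMinorCols A g

/-- Let `A ∈ ℤ^{m×n}` with `rank A = m`, `Δ = Δ(A)` the maximum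
absolute value of `m×m` minors, and `γ > 0`.  Then
`|{A x : ‖x‖₁ ≤ γ} ∩ ℤ^m| ≤ (2γ + 1)^m · Δ`. -/
theorem stmt13 (m n : ℕ) (A : Matrix (Fin m) (Fin n) ℤ) (hA : A.rank = m)
    (γ : ℝ) (hγ : 0 < γ)
    (P : Set (Fin m → ℤ))
    (hP : P = {y : Fin m → ℤ | ∃ x : Fin n → ℝ, (∑ i, |x i|) ≤ γ ∧
        ∀ j, (y j : ℝ) = ∑ i, (A j i : ℝ) * x i}) :
    P.Finite ∧ (Nat.card P : ℝ) ≤ (2 * γ + 1) ^ m * (maxMinorCols A : ℝ) := by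
  obtain ⟨f, hf⟩ :=
    exists_det_submatrix_ne_zero_of_rank_eq_card_of_isDomain (hA.trans (Fintype.card_fin m).symm)
  have : Nonempty (Fin m → Fin n) := ⟨f⟩
  obtain ⟨f₀, hf₀⟩ := exists_natAbs_det_submatrix_eq_maxMinorCols A
  have hB : (A.submatrix id f₀).det ≠ 0 := Int.natAbs_pos.mp <| hf₀ ▸
    (Int.natAbs_pos.mpr hf).trans_le (natAbs_det_submatrix_le_maxMinorCols A f)
  have hmax := abs_det_submatrix_map_intCast_le (K := ℝ) hf₀
  have hPB : ∀ y ∈ P, ∃ z : Fin m → ℝ, (∀ i, |z i| ≤ γ) ∧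
      (A.submatrix id f₀).map (↑) *ᵥ z = (↑) ∘ y := by
    rw [hP]
    rintro y ⟨x, hx, hyx⟩
    obtain ⟨z, hz, hzx⟩ := exists_submatrix_mulVec_eq_mulVec
      (by rwa [submatrix_map, ← Int.cast_det, Int.cast_ne_zero]) hmax x
    exact ⟨z, fun i => (hz i).trans hx, (submatrix_map _ _ _ _ ▸ hzx).trans (funext hyx).symm⟩
  obtain ⟨hfin, hcard⟩ := finite_and_natCard_le_of_forall_eq_mulVec hB hPB
  rw [hf₀, Fintype.card_fin] at hcard
  refine ⟨hfin, ?_⟩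
  calc (Nat.card P : ℝ) ≤ maxMinorCols A * ((⌊2 * γ⌋₊ : ℝ) + 1) ^ m := by exact_mod_cast hcard
    _ ≤ maxMinorCols A * (2 * γ + 1) ^ m := by gcongr; exact Nat.floor_le (by positivity)
    _ = (2 * γ + 1) ^ m * maxMinorCols A := mul_comm _ _
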